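/- arXiv:2009.07614 — 2 statements merged into one kernel-verified Lean document; each statement's English description precedes it below -/
import Mathlib

section
/- Let G be a finite abelian group. For all y, z ∈ G one has Σ_{x∈G} φ(x,y,z) = 0 in ⋀[ℤ]² A. -/
noncomputable def wedge (R : Type*) [CommRing R] {M : Type*} [AddCommGroup M] [Module R M]
    (u v : M) : ⋀[R]^2 M :=
  ⟨ExteriorAlgebra.ιMulti R 2 ![u, v],
    ExteriorAlgebra.ιMulti_range R 2 (Set.mem_range_self _)⟩

/-- The additive counterpart of `u(a,b,c,d) ∧ (1 - u(a,b,c,d))`, built from the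
three-variable expression `φ`. -/
noncomputable def phi (R : Type*) [CommRing R] {M G : Type*} [AddCommGroup M] [Module R M]
    [AddCommGroup G] (g : G → M) (x y z : G) : ⋀[R]^2 M :=
  wedge R (g (z + x) + g (z - x)) (g (y + x) + g (y - x))
    + wedge R (g (y + x) + g (y - x)) (g (z + y) + g (z - y))
    + wedge R (g (z + y) + g (z - y)) (g (z + x) + g (z - x))

noncomputable def delta (R : Type*) [CommRing R] {M G : Type*} [AddCommGroup M] [Module R M]
    [AddCommGroup G] (g : G → M) (a b c d : G) : ⋀[R]^2 M :=
  phi R g a b c + phi R g c d a + phi R g b a d + phi R g d c b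

/-- The additive counterpart of the Manin 3-term expression
`g_a ∧ g_b + g_b ∧ g_c + g_c ∧ g_a` with `a + b + c = 0`. -/
noncomputable def psi (R : Type*) [CommRing R] {M G : Type*} [AddCommGroup M] [Module R M]
    [AddCommGroup G] (g : G → M) (a b : G) : ⋀[R]^2 M :=
  wedge R (g a) (g b) + wedge R (g b) (g (-a - b)) + wedge R (g (-a - b)) (g a)

section WedgeLemmas

variable {R : Type*} [CommRing R] {M : Type*} [AddCommGroup M] [Module R M]

omit [AddCommGroup M] in
private lemma update0 (a b x : M) : Function.update ![a, b] 0 x = ![x, b] := by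
  funext i; fin_cases i <;> simp

omit [AddCommGroup M] in
private lemma update1 (a b x : M) : Function.update ![a, b] 1 x = ![a, x] := by
  funext i; fin_cases i <;> simp

lemma wedge_add_left (u u' w : M) :
    wedge R (u + u') w = wedge R u w + wedge R u' w := by
  apply Subtype.ext
  show ExteriorAlgebra.ιMulti R 2 ![u + u', w]
    = ExteriorAlgebra.ιMulti R 2 ![u, w] + ExteriorAlgebra.ιMulti R 2 ![u', w]
  rw [← update0 u w (u + u'), ← update0 u w u, ← update0 u w u',
    AlternatingMap.map_update_add]
  simp [update0]

lemma wedge_add_right (u w w' : M) :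
    wedge R u (w + w') = wedge R u w + wedge R u w' := by
  apply Subtype.ext
  show ExteriorAlgebra.ιMulti R 2 ![u, w + w']
    = ExteriorAlgebra.ιMulti R 2 ![u, w] + ExteriorAlgebra.ιMulti R 2 ![u, w']
  rw [← update1 u w (w + w'), ← update1 u w w, ← update1 u w w',
    AlternatingMap.map_update_add]
  simp [update1]

lemma wedge_swap (u v : M) : wedge R v u = - wedge R u v := by
  apply Subtype.ext
  show ExteriorAlgebra.ιMulti R 2 ![v, u] = -ExteriorAlgebra.ιMulti R 2 ![u, v]
  have h : ![v, u] = ![u, v] ∘ Equiv.swap (0 : Fin 2) 1 := by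
    funext i; fin_cases i <;> simp
  rw [h, AlternatingMap.map_swap _ _ (by decide)]

/-- `wedge` as an additive hom in the left argument. -/
noncomputable def wedgeLeftHom (D : M) : M →+ ⋀[R]^2 M :=
  AddMonoidHom.mk' (fun u => wedge R u D) (fun a b => wedge_add_left a b D)

noncomputable def wedgeRightHom (D : M) : M →+ ⋀[R]^2 M :=
  AddMonoidHom.mk' (fun u => wedge R D u) (fun a b => wedge_add_right D a b)

lemma sum_wedge_left {ι : Type*} (s : Finset ι) (f : ι → M) (D : M) :
    ∑ i ∈ s, wedge R (f i) D = wedge R (∑ i ∈ s, f i) D :=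
  (map_sum (wedgeLeftHom D) f s).symm

lemma sum_wedge_right {ι : Type*} (s : Finset ι) (f : ι → M) (D : M) :
    ∑ i ∈ s, wedge R D (f i) = wedge R D (∑ i ∈ s, f i) :=
  (map_sum (wedgeRightHom D) f s).symm

end WedgeLemmas

section Shifts

variable {A G : Type*} [AddCommGroup A] [AddCommGroup G] [Fintype G]

private lemma sum_addLeft (g : G → A) (c : G) : ∑ x : G, g (c + x) = ∑ x : G, g x :=
  Fintype.sum_equiv (Equiv.addLeft c) _ _ (fun x => by simp)

private lemma sum_subLeft (g : G → A) (c : G) : ∑ x : G, g (c - x) = ∑ x : G, g x :=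
  Fintype.sum_equiv (Equiv.subLeft c) _ _ (fun x => by simp)

end Shifts

/-- Lemma 4.3 of Brunault, *On the K₄ group of modular curves*:
`Σ_{x ∈ G} φ(x,y,z) = 0`. -/
theorem sum_phi_eq_zero {A G : Type*} [AddCommGroup A] [AddCommGroup G] [Fintype G]
    (g : G → A) (hg : ∀ x : G, g (-x) = g x) (y z : G) :
    ∑ x : G, phi ℤ g x y z = 0 := by
  classical
  set D : A := g (z + y) + g (z - y) with hD
  -- the four "diagonal" sums
  set f1 : G → ⋀[ℤ]^2 A := fun x => wedge ℤ (g (z + x)) (g (y + x)) with hf1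
  set f2 : G → ⋀[ℤ]^2 A := fun x => wedge ℤ (g (z + x)) (g (y - x)) with hf2
  set f3 : G → ⋀[ℤ]^2 A := fun x => wedge ℤ (g (z - x)) (g (y + x)) with hf3
  set f4 : G → ⋀[ℤ]^2 A := fun x => wedge ℤ (g (z - x)) (g (y - x)) with hf4
  -- reindexing: S4 = S1 and S3 = S2
  have h41 : ∑ x : G, f4 x = ∑ x : G, f1 x := by
    refine Fintype.sum_equiv (Equiv.neg G) _ _ (fun x => ?_)
    simp only [hf1, hf4, Equiv.neg_apply, sub_neg_eq_add, ← sub_eq_add_neg]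
  have h32 : ∑ x : G, f3 x = ∑ x : G, f2 x := by
    refine Fintype.sum_equiv (Equiv.neg G) _ _ (fun x => ?_)
    simp only [hf2, hf3, Equiv.neg_apply, sub_neg_eq_add, ← sub_eq_add_neg]
  -- S1 = -S1
  have hS1 : ∑ x : G, f1 x = -∑ x : G, f1 x := by
    calc ∑ x : G, f1 x = ∑ x : G, f1 (Equiv.subLeft (-(y + z)) x) :=
          (Equiv.sum_comp (Equiv.subLeft (-(y + z))) f1).symm
      _ = ∑ x : G, -f1 x := by
          refine Finset.sum_congr rfl (fun x _ => ?_)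
          have e1 : z + (-(y + z) - x) = -(y + x) := by abel
          have e2 : y + (-(y + z) - x) = -(z + x) := by abel
          simp only [hf1, Equiv.subLeft_apply, e1, e2, hg]
          exact wedge_swap _ _
      _ = -∑ x : G, f1 x := by rw [Finset.sum_neg_distrib]
  have hS2 : ∑ x : G, f2 x = -∑ x : G, f2 x := by
    calc ∑ x : G, f2 x = ∑ x : G, f2 (Equiv.subLeft (y - z) x) :=
          (Equiv.sum_comp (Equiv.subLeft (y - z)) f2).symm
      _ = ∑ x : G, -f2 x := by
          refine Finset.sum_congr rfl (fun x _ => ?_)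
          have e1 : z + (y - z - x) = y - x := by abel
          have e2 : y - (y - z - x) = z + x := by abel
          simp only [hf2, Equiv.subLeft_apply, e1, e2]
          exact wedge_swap _ _
      _ = -∑ x : G, f2 x := by rw [Finset.sum_neg_distrib]
  -- expand phi
  have expand : ∀ x : G, phi ℤ g x y z
      = (f1 x + f2 x + f3 x + f4 x)
        + wedge ℤ (g (y + x) + g (y - x)) D + wedge ℤ D (g (z + x) + g (z - x)) := by
    intro x
    simp only [phi, hf1, hf2, hf3, hf4, hD, wedge_add_left, wedge_add_right]
    abel
  rw [Finset.sum_congr rfl (fun x _ => expand x)]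
  rw [Finset.sum_add_distrib, Finset.sum_add_distrib, Finset.sum_add_distrib,
    Finset.sum_add_distrib, Finset.sum_add_distrib]
  rw [h41, h32, sum_wedge_left, sum_wedge_right]
  have hBC : ∑ x : G, (g (y + x) + g (y - x)) = ∑ x : G, (g (z + x) + g (z - x)) := by
    rw [Finset.sum_add_distrib, Finset.sum_add_distrib, sum_addLeft, sum_addLeft,
      sum_subLeft, sum_subLeft]
  rw [hBC, wedge_swap]
  nth_rewrite 1 [hS1]
  nth_rewrite 2 [hS2]
  abel
end

section
/- Let φ ∈ 𝒫 with expansion data j_∞, j_0, (a_n^{(j)}), (b_n^{(j)}), and assume a_0^{(j)} = 0 for all 0 ≤ j ≤ j_∞ and b_0^{(j)} = 0 for all 1 ≤ j ≤ j_0 (so φ is absolutely integrable on (0,∞)). Then ∫_0^∞ φ(y) dy = Σ_{n=1}^{∞} Σ_{j=0}^{j_∞} a_n^{(j)} (N/(2πn))^{j+1} Γ(j+1, 2πn/N) + Σ_{n=1}^{∞} Σ_{j=0}^{j_0} b_n^{(j)} (N/(2πn))^{j−1} Γ(j−1, 2πn/N) + b_0^{(0)}, where Γ(s, x) = ∫_x^∞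 t^{s−1} e^{−t} dt denotes the upper incomplete gamma function. (This is equation (eq mellin phi) of the paper.) -/
/-- A sequence of complex numbers has polynomial growth. -/
def PolyGrowth (c : ℕ → ℂ) : Prop :=
  ∃ (C : ℝ) (k : ℕ), 0 < C ∧ ∀ n : ℕ, ‖c n‖ ≤ C * (1 + n) ^ k

/-- The expansion `Σ_{j=0}^{J} y^j Σ_{n=0}^∞ a_n^{(j)} e^{-2πny/N}`. -/
noncomputable def expSum (N : ℕ) (J : ℕ) (a : ℕ → ℕ → ℂ) (y : ℝ) : ℂ :=
  ∑ j ∈ Finset.range (J + 1),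
    (y : ℂ) ^ j * ∑' n : ℕ, a j n * (Real.exp (-(2 * Real.pi * n * y / N)) : ℂ)

/-- Membership in the class `𝒫` of functions on `(0,∞)` (Definition 6.3 of the paper):
`φ(y)` and `φ(1/y)` both admit absolutely convergent expansions
`Σ_{j} y^j Σ_{n≥0} c_n^{(j)} e^{-2πny/N}` with coefficients of polynomial growth. -/
def MemP (N : ℕ) (φ : ℝ → ℂ) : Prop :=
  ∃ (jI j0 : ℕ) (a b : ℕ → ℕ → ℂ),
    (∀ j, PolyGrowth (a j)) ∧ (∀ j, PolyGrowth (b j)) ∧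
    (∀ y : ℝ, 0 < y →
      (∀ j, Summable fun n : ℕ => ‖a j n‖ * Real.exp (-(2 * Real.pi * n * y / N))) ∧
      (∀ j, Summable fun n : ℕ => ‖b j n‖ * Real.exp (-(2 * Real.pi * n * y / N))) ∧
      φ y = expSum N jI a y ∧ φ (1 / y) = expSum N j0 b y)

/-- The upper incomplete gamma function `Γ(s,x) = ∫_x^∞ t^{s-1} e^{-t} dt`. -/
noncomputable def incGamma (s x : ℝ) : ℝ := ∫ t in Set.Ioi x, t ^ (s - 1) * Real.exp (-t)

/-!
Split `∫₀^∞` at `1`. On `(1, ∞)` the expansion of `φ(y)` has no `n = 0` terms, and it can be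
integrated term by term: for `y ≥ 1` the `n`-th term is bounded by `|a_n| e^{-2πn/N}` (summable by
polynomial growth) times the integrable `y^j e^{-2πy/N}`, and
`∫₁^∞ y^s e^{-cy} dy = c^{-s-1} Γ(s+1, c)`. On `(0, 1)` the substitution `y = 1/x` gives
`∫₁^∞ x^{-2} φ(1/x) dx`; the only constant term left is `b_0^{(0)} x^{-2}`, which integrates to
`b_0^{(0)}`, and the rest is treated as before with `s = j - 2`.
-/

open MeasureTheory Real Set Filter

namespace PolyGrowth

variable {A : ℕ → ℂ}

lemma summable_norm_mul_pow (hA : PolyGrowth A) {r : ℝ} (hr0 : 0 ≤ r) (hr1 : r < 1) :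
    Summable fun n => ‖A n‖ * r ^ n := by
  obtain ⟨C, k, hC, hAk⟩ := hA
  have hdom : Summable fun n : ℕ => C * 2 ^ (k - 1) * (r ^ n + (n : ℝ) ^ k * r ^ n) :=
    ((summable_geometric_of_lt_one hr0 hr1).add
      (summable_pow_mul_geometric_of_norm_lt_one k (by rwa [norm_of_nonneg hr0]))).mul_left _
  refine hdom.of_nonneg_of_le (fun n => by positivity) fun n => ?_
  calc ‖A n‖ * r ^ n ≤ C * (1 + n) ^ k * r ^ n := by gcongr; exact hAk n
    _ ≤ C * (2 ^ (k - 1) * (1 ^ k + (n : ℝ) ^ k)) * r ^ n := by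
        gcongr; exact add_pow_le zero_le_one n.cast_nonneg k
    _ = C * 2 ^ (k - 1) * (r ^ n + (n : ℝ) ^ k * r ^ n) := by ring

lemma comp_succ (hA : PolyGrowth A) : PolyGrowth fun n => A (n + 1) := by
  obtain ⟨C, k, hC, hAk⟩ := hA
  refine ⟨C * 2 ^ k, k, by positivity, fun n => ?_⟩
  calc ‖A (n + 1)‖ ≤ C * (1 + (n + 1 : ℕ)) ^ k := hAk _
    _ ≤ C * (2 * (1 + n)) ^ k := by gcongr; push_cast; linarith
    _ = C * 2 ^ k * (1 + n) ^ k := by rw [mul_pow]; ring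

lemma summable_mul_exp_neg_mul (hA : PolyGrowth A) {c : ℝ} (hc : 0 < c) :
    Summable fun n : ℕ => A n * (exp (-(c * n)) : ℂ) := by
  refine Summable.of_norm ?_
  have hterm (n : ℕ) : ‖A n * (exp (-(c * n)) : ℂ)‖ = ‖A n‖ * exp (-c) ^ n := by
    rw [norm_mul, Complex.norm_real, norm_of_nonneg (exp_pos _).le, ← exp_nat_mul]
    ring_nf
  simp_rw [hterm]
  exact hA.summable_norm_mul_pow (exp_pos _).le (exp_lt_one_iff.2 (by linarith))

end PolyGrowth

section DominatedSeries

variable {α E : Type*} [MeasurableSpace α] {μ : Measure α} [NormedAddCommGroup E]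
  [CompleteSpace E] {F : ℕ → α → E} {u : ℕ → ℝ} {g : α → ℝ}

lemma integrable_tsum_of_norm_le_mul (hF : ∀ n, AEStronglyMeasurable (F n) μ)
    (hu : Summable u) (hg : Integrable g μ) (hle : ∀ n, ∀ᵐ a ∂μ, ‖F n a‖ ≤ u n * g a) :
    Integrable (fun a => ∑' n, F n a) μ := by
  rw [← ae_all_iff] at hle
  have hsum : ∀ᵐ a ∂μ, Summable fun n => F n a :=
    hle.mono fun a ha => (hu.mul_right (g a)).of_norm_bounded ha
  refine (hg.const_mul (∑' n, u n)).mono' ?_ ?_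
  · exact aestronglyMeasurable_of_tendsto_ae atTop
      (fun m => Finset.aestronglyMeasurable_fun_sum (Finset.range m) fun n _ => hF n)
      (hsum.mono fun a ha => ha.hasSum.tendsto_sum_nat)
  · filter_upwards [hle] with a ha
    exact tsum_of_norm_bounded (hu.hasSum.mul_right (g a)) ha

lemma hasSum_integral_of_norm_le_mul [NormedSpace ℝ E] (hF : ∀ n, AEStronglyMeasurable (F n) μ)
    (hu : Summable u) (hg : Integrable g μ) (hle : ∀ n, ∀ᵐ a ∂μ, ‖F n a‖ ≤ u n * g a) :
    HasSum (fun n => ∫ a, F n a ∂μ) (∫ a, ∑' n, F n a ∂μ) := by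
  refine hasSum_integral_of_dominated_convergence (fun n a => u n * g a) hF hle
    (ae_of_all _ fun a => hu.mul_right (g a)) ?_ ?_
  · simp_rw [tsum_mul_right]
    exact hg.const_mul _
  · filter_upwards [ae_all_iff.2 hle] with a ha
    exact ((hu.mul_right (g a)).of_norm_bounded ha).hasSum

end DominatedSeries

section ExpSeries

/-- The `n ≥ 1` part of an expansion as in `expSum`, reindexed from `0`, times `y ^ s`. -/
noncomputable def expSeries (c s : ℝ) (A : ℕ → ℂ) (y : ℝ) : ℂ :=
  ∑' n : ℕ, A n * ((y ^ s * exp (-(c * (n + 1) * y)) : ℝ) : ℂ)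

variable {c : ℝ} {A : ℕ → ℂ}

lemma integrableOn_Ioi_one_rpow_mul_exp_neg_mul (s : ℝ) (hc : 0 < c) :
    IntegrableOn (fun y : ℝ => y ^ s * exp (-(c * y))) (Ioi 1) := by
  have hmax : IntegrableOn (fun y : ℝ => y ^ max s 0 * exp (-(c * y))) (Ioi 1) := by
    simpa using (integrableOn_rpow_mul_exp_neg_mul_rpow (s := max s 0) (p := 1)
      (neg_one_lt_zero.trans_le (le_max_right s 0)) zero_lt_one hc).mono_set
        (Ioi_subset_Ioi zero_le_one)
  refine hmax.mono' (by fun_prop) ?_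
  filter_upwards [ae_restrict_mem measurableSet_Ioi] with y (hy : 1 < y)
  rw [norm_mul, norm_of_nonneg (rpow_nonneg (by linarith) s), norm_of_nonneg (exp_pos _).le]
  gcongr
  · exact hy.le
  · exact le_max_left s 0

lemma integral_Ioi_one_rpow_mul_exp_neg_mul (s : ℝ) (hc : 0 < c) :
    ∫ y in Ioi 1, y ^ s * exp (-(c * y)) = c ^ (-(s + 1)) * incGamma (s + 1) c := by
  have hscale := integral_comp_mul_left_Ioi (fun t => t ^ s * exp (-t)) 1 hc
  have hpow : ∫ y in Ioi 1, (c * y) ^ s * exp (-(c * y))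
      = c ^ s * ∫ y in Ioi 1, y ^ s * exp (-(c * y)) := by
    rw [← integral_const_mul]
    refine setIntegral_congr_fun measurableSet_Ioi fun y (hy : 1 < y) => ?_
    rw [mul_rpow hc.le (by linarith)]
    ring
  rw [hpow, smul_eq_mul, mul_one] at hscale
  rw [rpow_neg hc.le, rpow_add_one hc.ne', incGamma, add_sub_cancel_right, mul_inv, mul_assoc,
    ← hscale, inv_mul_cancel_left₀ (rpow_pos_of_pos hc s).ne']

lemma exp_neg_mul_succ_mul_le (hc : 0 ≤ c) (n : ℕ) {y : ℝ} (hy : 1 ≤ y) :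
    exp (-(c * (n + 1) * y)) ≤ exp (-c) ^ n * exp (-(c * y)) := by
  rw [← exp_nat_mul, ← exp_add, exp_le_exp]
  nlinarith [mul_nonneg (mul_nonneg hc n.cast_nonneg) (sub_nonneg.2 hy)]

lemma ae_norm_expSeries_term_le (hc : 0 ≤ c) (s : ℝ) (n : ℕ) :
    ∀ᵐ y ∂volume.restrict (Ioi 1), ‖A n * ((y ^ s * exp (-(c * (n + 1) * y)) : ℝ) : ℂ)‖
      ≤ ‖A n‖ * exp (-c) ^ n * (y ^ s * exp (-(c * y))) := by
  filter_upwards [ae_restrict_mem measurableSet_Ioi] with y (hy : 1 < y)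
  have hys : 0 ≤ y ^ s := rpow_nonneg (by linarith) s
  rw [norm_mul, Complex.norm_real, norm_of_nonneg (by positivity)]
  calc ‖A n‖ * (y ^ s * exp (-(c * (n + 1) * y)))
      ≤ ‖A n‖ * (y ^ s * (exp (-c) ^ n * exp (-(c * y)))) := by
        gcongr; exact exp_neg_mul_succ_mul_le hc n hy.le
    _ = ‖A n‖ * exp (-c) ^ n * (y ^ s * exp (-(c * y))) := by ring

namespace PolyGrowth

lemma integrableOn_expSeries (hA : PolyGrowth A) (hc : 0 < c) (s : ℝ) :
    IntegrableOn (expSeries c s A) (Ioi 1) :=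
  integrable_tsum_of_norm_le_mul (fun n => by fun_prop)
    (hA.summable_norm_mul_pow (exp_pos _).le (exp_lt_one_iff.2 (by linarith)))
    (integrableOn_Ioi_one_rpow_mul_exp_neg_mul s hc) (ae_norm_expSeries_term_le hc.le s)

lemma hasSum_integral_expSeries (hA : PolyGrowth A) (hc : 0 < c) (s : ℝ) :
    HasSum (fun n : ℕ => A n *
        (((c * (n + 1)) ^ (-(s + 1)) * incGamma (s + 1) (c * (n + 1)) : ℝ) : ℂ))
      (∫ y in Ioi 1, expSeries c s A y) := by
  have hterm (n : ℕ) : ∫ y in Ioi 1, A n * ((y ^ s * exp (-(c * (n + 1) * y)) : ℝ) : ℂ)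
      = A n * (((c * (n + 1)) ^ (-(s + 1)) * incGamma (s + 1) (c * (n + 1)) : ℝ) : ℂ) := by
    rw [integral_const_mul, integral_complex_ofReal,
      integral_Ioi_one_rpow_mul_exp_neg_mul s (by positivity : 0 < c * (n + 1))]
  have hsum := hasSum_integral_of_norm_le_mul (fun n => by fun_prop)
    (hA.summable_norm_mul_pow (exp_pos _).le (exp_lt_one_iff.2 (by linarith)))
    (integrableOn_Ioi_one_rpow_mul_exp_neg_mul s hc) (ae_norm_expSeries_term_le (A := A) hc.le s)
  simp only [hterm] at hsum
  exact hsum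

end PolyGrowth

end ExpSeries

lemma integrableOn_sum_expSeries {c : ℝ} (hc : 0 < c) {A : ℕ → ℕ → ℂ}
    (hA : ∀ j, PolyGrowth (A j)) (s : ℕ → ℝ) (J : Finset ℕ) :
    IntegrableOn (fun y => ∑ j ∈ J, expSeries c (s j) (A j) y) (Ioi 1) :=
  integrable_finsetSum J fun j _ => (hA j).integrableOn_expSeries hc (s j)

lemma hasSum_integral_sum_expSeries {c : ℝ} (hc : 0 < c) {A : ℕ → ℕ → ℂ}
    (hA : ∀ j, PolyGrowth (A j)) (s : ℕ → ℝ) (J : Finset ℕ) :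
    HasSum (fun n : ℕ => ∑ j ∈ J, A j n *
        (((c * (n + 1)) ^ (-(s j + 1)) * incGamma (s j + 1) (c * (n + 1)) : ℝ) : ℂ))
      (∫ y in Ioi 1, ∑ j ∈ J, expSeries c (s j) (A j) y) := by
  rw [integral_finsetSum _ fun j _ => (hA j).integrableOn_expSeries hc (s j)]
  exact hasSum_sum fun j _ => (hA j).hasSum_integral_expSeries hc (s j)

lemma two_pi_div_natCast_pos {N : ℕ} (hN : 1 ≤ N) : 0 < 2 * π / N := by
  have : (0 : ℝ) < N := by exact_mod_cast hN
  positivity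

lemma ofReal_rpow_neg_mul_incGamma_two_pi_div (N n : ℕ) {t : ℝ} {m : ℤ} (ht : t = m) :
    (((2 * π / N * (n + 1)) ^ (-t) * incGamma t (2 * π / N * (n + 1)) : ℝ) : ℂ)
      = ((N : ℂ) / (2 * π * (n + 1))) ^ m * (incGamma t (2 * π * (n + 1) / N) : ℂ) := by
  subst ht
  rw [Complex.ofReal_mul, ← Int.cast_neg, rpow_intCast, Complex.ofReal_zpow, zpow_neg,
    ← inv_zpow, div_mul_eq_mul_div]
  push_cast
  rw [inv_div]

lemma hasSum_integral_sum_expSeries_natCast {N : ℕ} (hN : 1 ≤ N) {A : ℕ → ℕ → ℂ}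
    (hA : ∀ j, PolyGrowth (A j)) (J : ℕ) :
    HasSum (fun n : ℕ => ∑ j ∈ Finset.range (J + 1), A j n
        * ((N : ℂ) / (2 * π * (n + 1))) ^ (j + 1)
        * (incGamma ((j : ℝ) + 1) (2 * π * (n + 1) / N) : ℂ))
      (∫ y in Ioi 1, ∑ j ∈ Finset.range (J + 1), expSeries (2 * π / N) j (A j) y) := by
  convert hasSum_integral_sum_expSeries (two_pi_div_natCast_pos hN) hA (fun j => j) _ using 1
  ext n
  refine Finset.sum_congr rfl fun j _ => ?_
  rw [ofReal_rpow_neg_mul_incGamma_two_pi_div N n (m := ((j + 1 : ℕ) : ℤ)) (by push_cast; rfl),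
    zpow_natCast, mul_assoc]

lemma hasSum_integral_sum_expSeries_neg_two_add {N : ℕ} (hN : 1 ≤ N) {A : ℕ → ℕ → ℂ}
    (hA : ∀ j, PolyGrowth (A j)) (J : ℕ) :
    HasSum (fun n : ℕ => ∑ j ∈ Finset.range (J + 1), A j n
        * ((N : ℂ) / (2 * π * (n + 1))) ^ ((j : ℤ) - 1)
        * (incGamma ((j : ℝ) - 1) (2 * π * (n + 1) / N) : ℂ))
      (∫ y in Ioi 1, ∑ j ∈ Finset.range (J + 1), expSeries (2 * π / N) (-2 + j) (A j) y) := by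
  convert hasSum_integral_sum_expSeries (two_pi_div_natCast_pos hN) hA (fun j => -2 + j) _
    using 1
  ext n
  refine Finset.sum_congr rfl fun j _ => ?_
  rw [show -2 + (j : ℝ) + 1 = j - 1 by ring,
    ofReal_rpow_neg_mul_incGamma_two_pi_div N n (m := (j : ℤ) - 1) (by push_cast; rfl),
    mul_assoc]

lemma ofReal_rpow_mul_expSeries {c s t y : ℝ} {A : ℕ → ℂ} (hy : 0 < y) :
    ((y ^ t : ℝ) : ℂ) * expSeries c s A y = expSeries c (t + s) A y := by
  rw [expSeries, expSeries, ← tsum_mul_left]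
  refine tsum_congr fun n => ?_
  rw [rpow_add hy]
  push_cast
  ring

section ExpSum

variable {N J : ℕ} {a : ℕ → ℕ → ℂ} {y : ℝ}

lemma expSum_eq_sum_add_sum_expSeries (hN : 1 ≤ N) (ha : ∀ j, PolyGrowth (a j)) (hy : 0 < y) :
    expSum N J a y = ∑ j ∈ Finset.range (J + 1), a j 0 * (y : ℂ) ^ j
      + ∑ j ∈ Finset.range (J + 1), expSeries (2 * π / N) j (fun n => a j (n + 1)) y := by
  have hN' : (0 : ℝ) < N := by exact_mod_cast hN
  rw [expSum, ← Finset.sum_add_distrib]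
  refine Finset.sum_congr rfl fun j _ => ?_
  have hsum : Summable fun n : ℕ => a j n * (exp (-(2 * π * n * y / N)) : ℂ) :=
    ((ha j).summable_mul_exp_neg_mul (c := 2 * π * y / N) (by positivity)).congr fun n => by
      ring_nf
  rw [hsum.tsum_eq_zero_add, expSeries, mul_add, ← tsum_mul_left]
  congr 1
  · simp [mul_comm]
  · refine tsum_congr fun n => ?_
    rw [rpow_natCast]
    push_cast
    ring_nf

lemma expSum_eq_sum_expSeries (hN : 1 ≤ N) (ha : ∀ j, PolyGrowth (a j))
    (ha0 : ∀ j ≤ J, a j 0 = 0) (hy : 0 < y) :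
    expSum N J a y
      = ∑ j ∈ Finset.range (J + 1), expSeries (2 * π / N) j (fun n => a j (n + 1)) y := by
  rw [expSum_eq_sum_add_sum_expSeries hN ha hy, Finset.sum_eq_zero fun j hj => by
    rw [ha0 j (Nat.lt_succ_iff.1 (Finset.mem_range.1 hj)), zero_mul], zero_add]

lemma ofReal_rpow_neg_two_mul_expSum (hN : 1 ≤ N) (ha : ∀ j, PolyGrowth (a j))
    (ha0 : ∀ j, 1 ≤ j → j ≤ J → a j 0 = 0) (hy : 0 < y) :
    ((y ^ (-2 : ℝ) : ℝ) : ℂ) * expSum N J a y = a 0 0 * ((y ^ (-2 : ℝ) : ℝ) : ℂ)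
      + ∑ j ∈ Finset.range (J + 1), expSeries (2 * π / N) (-2 + j) (fun n => a j (n + 1)) y := by
  have hconst : ∑ j ∈ Finset.range (J + 1), a j 0 * (y : ℂ) ^ j = a 0 0 := by
    rw [Finset.sum_eq_single 0 (fun j hj hj0 => by
      rw [ha0 j (Nat.one_le_iff_ne_zero.2 hj0) (Nat.lt_succ_iff.1 (Finset.mem_range.1 hj)),
        zero_mul]) (by simp)]
    simp
  rw [expSum_eq_sum_add_sum_expSeries hN ha hy, hconst, mul_add, Finset.mul_sum, mul_comm]
  simp_rw [ofReal_rpow_mul_expSeries hy]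

end ExpSum

section InversionOnUnitInterval

variable {E : Type*} [NormedAddCommGroup E] [NormedSpace ℝ E]

lemma image_inv_Ioi_one : Inv.inv '' Ioi (1 : ℝ) = Ioo 0 1 := by
  rw [image_inv_eq_inv, inv_Ioi₀ one_pos, inv_one]

lemma hasDerivWithinAt_inv_Ioi_one :
    ∀ x ∈ Ioi (1 : ℝ), HasDerivWithinAt Inv.inv (-(x ^ 2)⁻¹) (Ioi 1) x :=
  fun _ hx => (hasDerivAt_inv (zero_lt_one.trans hx).ne').hasDerivWithinAt

lemma eqOn_abs_neg_inv_sq_smul (f : ℝ → E) :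
    EqOn (fun x : ℝ => |-(x ^ 2)⁻¹| • f x⁻¹) (fun x => x ^ (-2 : ℝ) • f x⁻¹) (Ioi 1) := by
  intro x (hx : 1 < x)
  dsimp only
  rw [abs_neg, abs_inv, abs_of_pos (by positivity), rpow_neg (by linarith), rpow_two]

lemma integrableOn_Ioc_zero_one_iff_comp_inv (f : ℝ → E) :
    IntegrableOn f (Ioc 0 1) ↔ IntegrableOn (fun x : ℝ => x ^ (-2 : ℝ) • f x⁻¹) (Ioi 1) := by
  rw [integrableOn_Ioc_iff_integrableOn_Ioo, ← image_inv_Ioi_one,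
    integrableOn_image_iff_integrableOn_abs_deriv_smul measurableSet_Ioi
      hasDerivWithinAt_inv_Ioi_one inv_injective.injOn f]
  exact integrableOn_congr_fun (eqOn_abs_neg_inv_sq_smul f) measurableSet_Ioi

lemma integral_Ioc_zero_one_eq_integral_comp_inv (f : ℝ → E) :
    ∫ x in Ioc 0 1, f x = ∫ x in Ioi 1, x ^ (-2 : ℝ) • f x⁻¹ := by
  rw [integral_Ioc_eq_integral_Ioo, ← image_inv_Ioi_one,
    integral_image_eq_integral_abs_deriv_smul measurableSet_Ioi
      hasDerivWithinAt_inv_Ioi_one inv_injective.injOn f]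
  exact setIntegral_congr_fun measurableSet_Ioi (eqOn_abs_neg_inv_sq_smul f)

lemma integral_Ioi_zero_eq_integral_comp_inv_add {f : ℝ → E}
    (h0 : IntegrableOn (fun x : ℝ => x ^ (-2 : ℝ) • f x⁻¹) (Ioi 1))
    (h1 : IntegrableOn f (Ioi 1)) :
    ∫ x in Ioi 0, f x = (∫ x in Ioi 1, x ^ (-2 : ℝ) • f x⁻¹) + ∫ x in Ioi 1, f x := by
  rw [← Ioc_union_Ioi_eq_Ioi zero_le_one, setIntegral_union (Ioc_disjoint_Ioi le_rfl)
    measurableSet_Ioi ((integrableOn_Ioc_zero_one_iff_comp_inv f).2 h0) h1,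
    integral_Ioc_zero_one_eq_integral_comp_inv]

end InversionOnUnitInterval

lemma integral_Ioi_one_rpow_neg_two : ∫ x in Ioi (1 : ℝ), x ^ (-2 : ℝ) = 1 := by
  rw [integral_Ioi_rpow_of_lt (by norm_num) one_pos]
  norm_num

/-- Equation (eq mellin phi): the integral over `(0,∞)` of an absolutely integrable
function of the class `𝒫` as a rapidly convergent series of incomplete gamma values. -/
theorem memP_integral_eq (N : ℕ) (hN : 1 ≤ N) (φ : ℝ → ℂ) (jI j0 : ℕ)
    (a b : ℕ → ℕ → ℂ) (ha : ∀ j, PolyGrowth (a j)) (hb : ∀ j, PolyGrowth (b j))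
    (hφ : ∀ y : ℝ, 0 < y → φ y = expSum N jI a y)
    (hφ' : ∀ y : ℝ, 0 < y → φ (1 / y) = expSum N j0 b y)
    (ha0 : ∀ j ≤ jI, a j 0 = 0) (hb0 : ∀ j, 1 ≤ j → j ≤ j0 → b j 0 = 0) :
    ∫ y in Set.Ioi (0 : ℝ), φ y =
      (∑' n : ℕ, ∑ j ∈ Finset.range (jI + 1),
          a j (n + 1) * ((N : ℂ) / (2 * (Real.pi : ℂ) * ((n : ℂ) + 1))) ^ (j + 1)
            * (incGamma ((j : ℝ) + 1) (2 * Real.pi * ((n : ℝ) + 1) / N) : ℂ))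
        + (∑' n : ℕ, ∑ j ∈ Finset.range (j0 + 1),
            b j (n + 1) * ((N : ℂ) / (2 * (Real.pi : ℂ) * ((n : ℂ) + 1))) ^ ((j : ℤ) - 1)
              * (incGamma ((j : ℝ) - 1) (2 * Real.pi * ((n : ℝ) + 1) / N) : ℂ))
        + b 0 0 := by
  have hc := two_pi_div_natCast_pos hN
  have hφ_Ioi : EqOn φ (fun y => ∑ j ∈ Finset.range (jI + 1),
      expSeries (2 * π / N) j (fun n => a j (n + 1)) y) (Ioi 1) := fun y (hy : 1 < y) => by
    rw [hφ y (by linarith), expSum_eq_sum_expSeries hN ha ha0 (by linarith)]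
  have hφ_inv : EqOn (fun x : ℝ => x ^ (-2 : ℝ) • φ x⁻¹)
      (fun x => b 0 0 * ((x ^ (-2 : ℝ) : ℝ) : ℂ) + ∑ j ∈ Finset.range (j0 + 1),
        expSeries (2 * π / N) (-2 + j) (fun n => b j (n + 1)) x) (Ioi 1) :=
      fun x (hx : 1 < x) => by
    dsimp only
    rw [← one_div, hφ' x (by linarith), Complex.real_smul,
      ofReal_rpow_neg_two_mul_expSum hN hb hb0 (by linarith)]
  have hint_A := integrableOn_sum_expSeries hc (fun j => (ha j).comp_succ) (fun j => j)
    (Finset.range (jI + 1))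
  have hint_B := integrableOn_sum_expSeries hc (fun j => (hb j).comp_succ) (fun j => -2 + j)
    (Finset.range (j0 + 1))
  have hint_pow : IntegrableOn (fun x : ℝ => b 0 0 * ((x ^ (-2 : ℝ) : ℝ) : ℂ)) (Ioi 1) :=
    (integrableOn_Ioi_rpow_of_lt (by norm_num) one_pos).ofReal.const_mul _
  rw [integral_Ioi_zero_eq_integral_comp_inv_add
      ((hint_pow.add hint_B).congr_fun hφ_inv.symm measurableSet_Ioi)
      (hint_A.congr_fun hφ_Ioi.symm measurableSet_Ioi),
    setIntegral_congr_fun measurableSet_Ioi hφ_inv,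
    setIntegral_congr_fun measurableSet_Ioi hφ_Ioi,
    integral_add hint_pow hint_B, integral_const_mul, integral_complex_ofReal,
    integral_Ioi_one_rpow_neg_two,
    ← (hasSum_integral_sum_expSeries_natCast hN (fun j => (ha j).comp_succ) jI).tsum_eq,
    ← (hasSum_integral_sum_expSeries_neg_two_add hN (fun j => (hb j).comp_succ) j0).tsum_eq]
  push_cast
  ring
end
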